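/- arXiv:2305.17272 — 6 statements merged into one kernel-verified Lean document; each statement's English description precedes it below -/
import Mathlib

section
/- If C_k is a sequence of nonempty closed convex subsets of ℝ^{n+1} such that the distance functions d_{C_k} converge pointwise to a function f, then f equals the distance function d_C of the closed convex set C = f⁻¹({0}), and the convergence is uniform on bounded sets. -/
/-!
The limit `f` is a pointwise limit of `1`-Lipschitz functions, hence `1`-Lipschitz, and this
equicontinuity upgrades pointwise to uniform convergence on compact, hence on bounded, sets.
For the identification of `f`, take nearest points `p k` of `closure (C k)` to `x`; they stay
in a bounded set, and a limit point `q` of them satisfies `dist x q = f x` and `f q = 0`.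
Together with the Lipschitz bound `f x ≤ dist x y` for every zero `y` of `f`, this makes `f x`
the distance from `x` to the zero set of `f`.
-/

open Metric Filter Set Topology

variable {α : Type*} [PseudoMetricSpace α]

theorem LipschitzWith.of_tendsto {ι : Type*} {l : Filter ι} [l.NeBot] {K : NNReal}
    {F : ι → α → ℝ} {f : α → ℝ} (hF : ∀ i, LipschitzWith K (F i))
    (hf : ∀ x, Tendsto (F · x) l (𝓝 (f x))) : LipschitzWith K f :=
  LipschitzWith.of_le_add_mul K fun x y =>
    le_of_tendsto_of_tendsto' (hf x) ((hf y).add_const _) fun i => (hF i).le_add_mul x y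

theorem Equicontinuous.tendstoUniformlyOn_of_tendsto {ι : Type*} {F : ι → α → ℝ}
    {f : α → ℝ} {l : Filter ι} (hF : Equicontinuous F) (hf : ∀ x, Tendsto (F · x) l (𝓝 (f x)))
    {K : Set α} (hK : IsCompact K) : TendstoUniformlyOn F f l K := by
  have hcover : ⋃₀ {K : Set α | IsCompact K} = univ :=
    eq_univ_of_forall fun x => ⟨{x}, isCompact_singleton, rfl⟩
  have hunif := (EquicontinuousOn.tendsto_uniformOnFun_iff_pi (fun _ hK => hK) hcover
    (fun _ _ => hF.equicontinuousOn _) l f).mpr (tendsto_pi_nhds.mpr hf)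
  exact UniformOnFun.tendsto_iff_tendstoUniformlyOn.mp hunif K hK

theorem eq_infDist_preimage_zero {f : α → ℝ} (hf : LipschitzWith 1 f)
    (h : ∀ x, ∃ q, f q = 0 ∧ dist x q = f x) : f = fun x => infDist x (f ⁻¹' {0}) := by
  funext x
  obtain ⟨q, hq, hxq⟩ := h x
  refine le_antisymm ((le_infDist ⟨q, hq⟩).mpr fun y (hy : f y = 0) => ?_) ?_
  · simpa [hy] using hf.le_add_mul x y
  · exact hxq ▸ infDist_le_dist_of_mem hq

section Limit

variable {C : ℕ → Set α} {f : α → ℝ}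
  (hf : ∀ x, Tendsto (fun k => infDist x (C k)) atTop (𝓝 (f x)))
include hf

theorem lipschitzWith_one_of_tendsto_infDist : LipschitzWith 1 f :=
  .of_tendsto (fun _ => lipschitz_infDist_pt _) hf

theorem exists_zero_dist_eq_of_tendsto_infDist [ProperSpace α] (hne : ∀ k, (C k).Nonempty)
    (x : α) : ∃ q, f q = 0 ∧ dist x q = f x := by
  choose p hpC hxp using fun k =>
    isClosed_closure.exists_infDist_eq_dist (hne k).closure x
  simp only [infDist_closure] at hxp
  obtain ⟨R, hR⟩ := (hf x).bddAbove_range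
  have hpR : ∀ k, p k ∈ closedBall x R := fun k => by
    rw [mem_closedBall, dist_comm, ← hxp k]
    exact hR (mem_range_self k)
  obtain ⟨q, -, φ, hφ, hpq⟩ := (isCompact_closedBall x R).tendsto_subseq hpR
  have hdist : Tendsto (fun j => dist x (p (φ j))) atTop (𝓝 (f x)) := by
    simpa only [Function.comp_def, hxp] using (hf x).comp hφ.tendsto_atTop
  refine ⟨q, le_antisymm ?_ (ge_of_tendsto' (hf q) fun _ => infDist_nonneg), ?_⟩
  · have hq : Tendsto (fun j => dist q (p (φ j))) atTop (𝓝 0) := by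
      simpa using (tendsto_const_nhds (x := q)).dist hpq
    refine le_of_tendsto_of_tendsto' ((hf q).comp hφ.tendsto_atTop) hq fun j => ?_
    exact (infDist_closure (x := q)).symm.trans_le (infDist_le_dist_of_mem (hpC (φ j)))
  · exact tendsto_nhds_unique (tendsto_const_nhds.dist hpq) hdist

end Limit

theorem stmt_1_general {n : ℕ} (C : ℕ → Set (EuclideanSpace ℝ (Fin (n + 1))))
    (hne : ∀ k, (C k).Nonempty)
    (f : EuclideanSpace ℝ (Fin (n + 1)) → ℝ)
    (hf : ∀ x, Filter.Tendsto (fun k => Metric.infDist x (C k)) Filter.atTop (nhds (f x))) :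
    (f = fun x => Metric.infDist x (f ⁻¹' {0})) ∧
      ∀ s : Set (EuclideanSpace ℝ (Fin (n + 1))), Bornology.IsBounded s →
        TendstoUniformlyOn (fun k x => Metric.infDist x (C k)) f Filter.atTop s := by
  refine ⟨eq_infDist_preimage_zero (lipschitzWith_one_of_tendsto_infDist hf)
    (exists_zero_dist_eq_of_tendsto_infDist hf hne), fun s hs => ?_⟩
  have hequi : Equicontinuous fun k x => infDist x (C k) :=
    (LipschitzWith.uniformEquicontinuous _ 1 fun _ => lipschitz_infDist_pt _).equicontinuous
  exact (hequi.tendstoUniformlyOn_of_tendsto hf hs.isCompact_closure).mono subset_closure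

theorem stmt_1 {n : ℕ} (C : ℕ → Set (EuclideanSpace ℝ (Fin (n + 1))))
    (hne : ∀ k, (C k).Nonempty) (hcl : ∀ k, IsClosed (C k)) (hconv : ∀ k, Convex ℝ (C k))
    (f : EuclideanSpace ℝ (Fin (n + 1)) → ℝ)
    (hf : ∀ x, Filter.Tendsto (fun k => Metric.infDist x (C k)) Filter.atTop (nhds (f x))) :
    (f = fun x => Metric.infDist x (f ⁻¹' {0})) ∧
      ∀ s : Set (EuclideanSpace ℝ (Fin (n + 1))), Bornology.IsBounded s →
        TendstoUniformlyOn (fun k x => Metric.infDist x (C k)) f Filter.atTop s :=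
  stmt_1_general C hne f hf
end

section
/- There is a constant c_n (depending only on n) such that for every closed convex set C ⊆ ℝ^{n+1} with nonempty interior and boundary of class such that the n-dimensional Hausdorff measure is defined, and for every R ≥ 1, ∫_{∂C \ B_R(0)} e^{−‖x‖²/4} dH^n ≤ c_n R^n e^{−R²/4}. -/
/-!
Put `K = C ∩ B_r`. The nearest-point projection onto `K` is 1-Lipschitz and fixes the ray
from `P x` through `x`; since every such ray leaves the cube `[-r, r]^{n+1}` through its
boundary `S`, every boundary point of `K` is a limit of points of `P(S)`, which is compact.
Hence `H^n(∂C ∩ B_r) ≤ H^n(S) = r^n H^n(S₁)`, with `H^n(S₁) < ∞` because `S₁` is covered by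
isometric copies of an `n`-dimensional cube. Cutting `{‖x‖ > R}` into unit shells and using
`e^{-(R+k)^2/4} ≤ e^{-R^2/4} e^{-k/2}` for `R ≥ 1` sums this polynomial growth against the
Gaussian weight.
-/

open MeasureTheory Real Set Metric Filter
open scoped InnerProductSpace NNReal ENNReal Pointwise

section MetricProjection

variable {F : Type*} [NormedAddCommGroup F] [InnerProductSpace ℝ F]

theorem norm_sub_le_of_inner_sub_nonpos {x y v w : F} (hv : ⟪x - v, w - v⟫_ℝ ≤ 0)
    (hw : ⟪y - w, v - w⟫_ℝ ≤ 0) : ‖v - w‖ ≤ ‖x - y‖ := by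
  have key : ‖v - w‖ ^ 2 ≤ ⟪x - y, v - w⟫_ℝ := by
    rw [← real_inner_self_eq_norm_sq]
    simp only [inner_sub_left, inner_sub_right, real_inner_comm] at hv hw ⊢
    linarith
  rcases (norm_nonneg (v - w)).eq_or_lt with h | h
  · rw [← h]; exact norm_nonneg _
  · nlinarith [real_inner_le_norm (x - y) (v - w)]

variable [CompleteSpace F] {K : Set F}

/-- The nearest-point projection onto `K`, through its variational characterisation; a junk
value unless `K` is nonempty, closed and convex. -/
noncomputable def metricProj (K : Set F) (x : F) : F :=
  Classical.epsilon fun v => v ∈ K ∧ ∀ z ∈ K, ⟪x - v, z - v⟫_ℝ ≤ 0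

theorem metricProj_spec (hne : K.Nonempty) (hK : IsClosed K) (hconv : Convex ℝ K) (x : F) :
    metricProj K x ∈ K ∧ ∀ z ∈ K, ⟪x - metricProj K x, z - metricProj K x⟫_ℝ ≤ 0 := by
  obtain ⟨v, hv, hmin⟩ := exists_norm_eq_iInf_of_complete_convex hne hK.isComplete hconv x
  exact Classical.epsilon_spec (p := fun v => v ∈ K ∧ ∀ z ∈ K, ⟪x - v, z - v⟫_ℝ ≤ 0)
    ⟨v, hv, (norm_eq_iInf_iff_real_inner_le_zero hconv hv).1 hmin⟩

theorem metricProj_eq (hne : K.Nonempty) (hK : IsClosed K) (hconv : Convex ℝ K) {x v : F}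
    (hv : v ∈ K) (h : ∀ z ∈ K, ⟪x - v, z - v⟫_ℝ ≤ 0) : metricProj K x = v := by
  obtain ⟨hmem, hineq⟩ := metricProj_spec hne hK hconv x
  have := norm_sub_le_of_inner_sub_nonpos (hineq v hv) (h _ hmem)
  rwa [sub_self, norm_zero, norm_le_zero_iff, sub_eq_zero] at this

theorem metricProj_of_mem (hne : K.Nonempty) (hK : IsClosed K) (hconv : Convex ℝ K) {x : F}
    (hx : x ∈ K) : metricProj K x = x :=
  metricProj_eq hne hK hconv hx fun z _ => by simp

theorem metricProj_add_smul_sub (hne : K.Nonempty) (hK : IsClosed K) (hconv : Convex ℝ K)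
    (x : F) {t : ℝ} (ht : 0 ≤ t) :
    metricProj K (metricProj K x + t • (x - metricProj K x)) = metricProj K x := by
  obtain ⟨hmem, hineq⟩ := metricProj_spec hne hK hconv x
  refine metricProj_eq hne hK hconv hmem fun z hz => ?_
  rw [add_sub_cancel_left, real_inner_smul_left]
  exact mul_nonpos_of_nonneg_of_nonpos ht (hineq z hz)

theorem lipschitzWith_metricProj (hne : K.Nonempty) (hK : IsClosed K) (hconv : Convex ℝ K) :
    LipschitzWith 1 (metricProj K) := by
  refine LipschitzWith.of_dist_le_mul fun x y => ?_
  rw [NNReal.coe_one, one_mul, dist_eq_norm, dist_eq_norm]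
  exact norm_sub_le_of_inner_sub_nonpos ((metricProj_spec hne hK hconv x).2 _
    (metricProj_spec hne hK hconv y).1) ((metricProj_spec hne hK hconv y).2 _
    (metricProj_spec hne hK hconv x).1)

theorem frontier_subset_closure_image_metricProj (hK : IsClosed K) (hconv : Convex ℝ K)
    {S : Set F} (hS : ∀ p ∈ K, ∀ v ≠ 0, ∃ t : ℝ, 0 ≤ t ∧ p + t • v ∈ S) :
    frontier K ⊆ closure (metricProj K '' S) := by
  intro y hy
  have hyK : y ∈ K := hK.frontier_subset hy
  have hne : K.Nonempty := ⟨y, hyK⟩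
  have hcont := (lipschitzWith_metricProj hne hK hconv).continuous
  have hKc : metricProj K '' Kᶜ ⊆ metricProj K '' S := by
    rintro _ ⟨x, hx, rfl⟩
    have hv : x - metricProj K x ≠ 0 :=
      sub_ne_zero.2 fun h => hx (h ▸ (metricProj_spec hne hK hconv x).1)
    obtain ⟨t, ht, hS'⟩ := hS _ (metricProj_spec hne hK hconv x).1 _ hv
    exact ⟨_, hS', metricProj_add_smul_sub hne hK hconv x ht⟩
  have hyc : y ∈ closure Kᶜ := frontier_subset_closure (frontier_compl K ▸ hy)
  rw [← metricProj_of_mem hne hK hconv hyK]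
  exact closure_mono hKc (image_closure_subset_closure_image hcont ⟨y, hyc, rfl⟩)

theorem hausdorffMeasure_frontier_le [MeasurableSpace F] [BorelSpace F] (hK : IsClosed K)
    (hconv : Convex ℝ K) {S : Set F} (hS : IsCompact S)
    (hrays : ∀ p ∈ K, ∀ v ≠ 0, ∃ t : ℝ, 0 ≤ t ∧ p + t • v ∈ S) {d : ℝ} (hd : 0 ≤ d) :
    μH[d] (frontier K) ≤ μH[d] S := by
  rcases K.eq_empty_or_nonempty with rfl | hne
  · simp
  have hP := lipschitzWith_metricProj hne hK hconv
  calc μH[d] (frontier K) ≤ μH[d] (closure (metricProj K '' S)) :=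
        measure_mono (frontier_subset_closure_image_metricProj hK hconv hrays)
    _ = μH[d] (metricProj K '' S) := by rw [(hS.image hP.continuous).isClosed.closure_eq]
    _ ≤ μH[d] S := by simpa using hP.hausdorffMeasure_image_le hd S

end MetricProjection

theorem IsClosed.frontier_inter_subset_frontier_inter {X : Type*} [TopologicalSpace X]
    {C s : Set X} (hC : IsClosed C) (hs : IsClosed s) : frontier C ∩ s ⊆ frontier (C ∩ s) := by
  rintro y ⟨hyC, hys⟩
  rw [(hC.inter hs).frontier_eq]
  exact ⟨⟨hC.frontier_subset hyC, hys⟩, fun h => hyC.2 (interior_mono inter_subset_left h)⟩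

theorem exists_nonneg_norm_add_smul_eq {E : Type*} [NormedAddCommGroup E] [NormedSpace ℝ E]
    {p v : E} {ρ : ℝ} (hp : ‖p‖ ≤ ρ) (hv : v ≠ 0) : ∃ t : ℝ, 0 ≤ t ∧ ‖p + t • v‖ = ρ := by
  have hcont : Continuous fun t : ℝ => ‖p + t • v‖ := by fun_prop
  have htop : Tendsto (fun t : ℝ => ‖p + t • v‖) atTop atTop := by
    refine tendsto_atTop_mono (fun t => ?_) (tendsto_atTop_add_const_right _ (-‖p‖)
      (tendsto_id.atTop_mul_const (norm_pos_iff.2 hv)))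
    have h₁ : t * ‖v‖ ≤ ‖t • v‖ := by
      rw [norm_smul, Real.norm_eq_abs]
      exact mul_le_mul_of_nonneg_right (le_abs_self t) (norm_nonneg v)
    have h₂ := norm_sub_le (p + t • v) p
    rw [add_sub_cancel_left] at h₂
    dsimp
    linarith
  exact intermediate_value_Ici hcont.continuousOn htop
    (show ρ ∈ Ici ‖p + (0 : ℝ) • v‖ by simpa using hp)

theorem isometry_insertNth {n : ℕ} (i : Fin (n + 1)) (a : ℝ) :
    Isometry (Fin.insertNth (α := fun _ => ℝ) i a) :=
  Isometry.of_dist_eq fun f g => by simp [Fin.dist_insertNth_insertNth]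

-- `Fin (n + 1) → ℝ` carries the sup norm: its spheres are boundaries of cubes.
theorem hausdorffMeasure_unitSphere_pi_lt_top (n : ℕ) :
    μH[n] (sphere (0 : Fin (n + 1) → ℝ) 1) < ∞ := by
  have hcover : sphere (0 : Fin (n + 1) → ℝ) 1 ⊆ ⋃ p ∈ (univ : Set (Fin (n + 1))) ×ˢ {1, -1},
      Fin.insertNth (α := fun _ => ℝ) p.1 p.2 '' closedBall 0 1 := by
    intro x hx
    rw [mem_sphere_zero_iff_norm] at hx
    obtain ⟨i, hi⟩ : ∃ i, ‖x i‖ = 1 := by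
      by_contra! h
      have : ‖x‖ < 1 := (pi_norm_lt_iff one_pos).2 fun i =>
        ((norm_le_pi_norm x i).trans_eq hx).lt_of_ne (h i)
      linarith
    refine mem_biUnion (x := (i, x i)) ⟨mem_univ i, ?_⟩ ⟨i.removeNth x, ?_, ?_⟩
    · rw [Real.norm_eq_abs] at hi
      rcases abs_eq zero_le_one |>.1 hi with h | h <;> simp [h]
    · rw [mem_closedBall_zero_iff, ← hx]
      exact pi_norm_le_iff_of_nonneg (norm_nonneg x) |>.2 fun k => norm_le_pi_norm x _
    · exact Fin.insertNth_self_removeNth i x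
  refine (measure_mono hcover).trans_lt (measure_biUnion_lt_top (finite_univ.prod (toFinite _))
    fun p _ => ?_)
  rw [(isometry_insertNth p.1 p.2).hausdorffMeasure_image (Or.inl n.cast_nonneg)]
  have hvol : (μH[n] : Measure (Fin n → ℝ)) = volume := by
    simpa using hausdorffMeasure_pi_real (ι := Fin n)
  rw [hvol]
  exact measure_closedBall_lt_top

theorem hausdorffMeasure_sphere_pi (n : ℕ) {r : ℝ} (hr : 0 < r) :
    μH[n] (sphere (0 : Fin (n + 1) → ℝ) r) =
      ENNReal.ofReal r ^ n * μH[n] (sphere (0 : Fin (n + 1) → ℝ) 1) := by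
  have hsphere : sphere (0 : Fin (n + 1) → ℝ) r = r • sphere 0 1 := by
    rw [smul_sphere' hr.ne', smul_zero, Real.norm_of_nonneg hr.le, mul_one]
  rw [hsphere, Measure.hausdorffMeasure_smul₀ n.cast_nonneg hr.ne', ENNReal.smul_def,
    smul_eq_mul, NNReal.rpow_natCast, ENNReal.coe_pow, ← enorm_eq_nnnorm, ← ofReal_norm,
    Real.norm_of_nonneg hr.le]

theorem exists_hausdorffMeasure_frontier_inter_closedBall_le (n : ℕ) :
    ∃ M : ℝ≥0, ∀ C : Set (EuclideanSpace ℝ (Fin (n + 1))), IsClosed C → Convex ℝ C →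
      ∀ r : ℝ, 0 < r → μH[n] (frontier C ∩ closedBall 0 r) ≤ M * ENNReal.ofReal r ^ n := by
  obtain ⟨L, hL⟩ : ∃ L, LipschitzWith L
      (WithLp.toLp 2 : (Fin (n + 1) → ℝ) → EuclideanSpace ℝ (Fin (n + 1))) :=
    ⟨_, PiLp.lipschitzWith_toLp 2 _⟩
  have hfin : (L : ℝ≥0∞) ^ n * μH[n] (sphere (0 : Fin (n + 1) → ℝ) 1) ≠ ∞ :=
    ENNReal.mul_ne_top (by simp) (hausdorffMeasure_unitSphere_pi_lt_top n).ne
  refine ⟨ENNReal.toNNReal (L ^ n * μH[n] (sphere (0 : Fin (n + 1) → ℝ) 1)),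
    fun C hC hconv r hr => ?_⟩
  rw [ENNReal.coe_toNNReal hfin]
  have hrays : ∀ p ∈ C ∩ closedBall 0 r, ∀ v ≠ 0, ∃ t : ℝ, 0 ≤ t ∧
      p + t • v ∈ WithLp.toLp 2 '' sphere (0 : Fin (n + 1) → ℝ) r := by
    intro p hp v hv
    have hp' : ‖WithLp.ofLp p‖ ≤ r := ((PiLp.lipschitzWith_ofLp 2 _).norm_le_mul rfl p).trans
      (by simpa using hp.2)
    obtain ⟨t, ht, hnorm⟩ :=
      exists_nonneg_norm_add_smul_eq hp' (v := WithLp.ofLp v) (by simpa using hv)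
    exact ⟨t, ht, _, mem_sphere_zero_iff_norm.2 hnorm, by simp⟩
  calc μH[n] (frontier C ∩ closedBall 0 r)
      ≤ μH[n] (frontier (C ∩ closedBall 0 r)) :=
        measure_mono (hC.frontier_inter_subset_frontier_inter isClosed_closedBall)
    _ ≤ μH[n] (WithLp.toLp 2 '' sphere (0 : Fin (n + 1) → ℝ) r) :=
        hausdorffMeasure_frontier_le (hC.inter isClosed_closedBall)
          (hconv.inter (convex_closedBall 0 r))
          ((isCompact_sphere 0 r).image (PiLp.continuous_toLp 2 _)) hrays n.cast_nonneg
    _ ≤ L ^ n * μH[n] (sphere (0 : Fin (n + 1) → ℝ) r) := by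
      simpa using hL.hausdorffMeasure_image_le n.cast_nonneg (sphere 0 r)
    _ = _ := by rw [hausdorffMeasure_sphere_pi n hr]; ring

theorem compl_closedBall_subset_iUnion_shells {X : Type*} [PseudoMetricSpace X] (x : X) (R : ℝ) :
    (closedBall x R)ᶜ ⊆ ⋃ k : ℕ, closedBall x (R + k + 1) \ ball x (R + k) := by
  intro y hy
  rw [mem_compl_iff, mem_closedBall, not_le] at hy
  refine mem_iUnion.2 ⟨⌊dist y x - R⌋₊, ?_, ?_⟩
  · rw [mem_closedBall]
    linarith [Nat.lt_floor_add_one (dist y x - R)]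
  · rw [mem_ball, not_lt]
    linarith [Nat.floor_le (sub_nonneg.2 hy.le)]

theorem summable_add_two_pow_mul_exp_neg_half (n : ℕ) :
    Summable fun k : ℕ => ((k : ℝ) + 2) ^ n * exp (-k / 2) := by
  have h := ((summable_nat_add_iff 2).2 (summable_pow_mul_exp_neg_nat_mul n
    (by norm_num : (0 : ℝ) < 1 / 2))).mul_left (exp 1)
  refine h.congr fun k => ?_
  push_cast
  rw [mul_left_comm, ← exp_add]
  ring_nf

theorem integral_exp_neg_sq_compl_closedBall_le {X : Type*} [NormedAddCommGroup X]
    [MeasurableSpace X] [BorelSpace X] (ν : Measure X) (n : ℕ) (M : ℝ≥0)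
    (hν : ∀ r, 1 ≤ r → ν (closedBall 0 r) ≤ M * ENNReal.ofReal r ^ n) {R : ℝ} (hR : 1 ≤ R) :
    ∫ x in (closedBall 0 R)ᶜ, exp (-‖x‖ ^ 2 / 4) ∂ν
      ≤ (M * ∑' k : ℕ, ((k : ℝ) + 2) ^ n * exp (-k / 2)) * R ^ n * exp (-R ^ 2 / 4) := by
  set c : ℝ := M * R ^ n * exp (-R ^ 2 / 4) with hc
  set shell : ℕ → Set X := fun k => closedBall 0 (R + k + 1) \ ball 0 (R + k)
  have hshell (k : ℕ) : ∫⁻ x in shell k, ENNReal.ofReal (exp (-‖x‖ ^ 2 / 4)) ∂ν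
      ≤ ENNReal.ofReal (c * (((k : ℝ) + 2) ^ n * exp (-k / 2))) := by
    have hk := k.cast_nonneg (α := ℝ)
    have hexp : ∀ x ∈ shell k, exp (-‖x‖ ^ 2 / 4) ≤ exp (-R ^ 2 / 4) * exp (-k / 2) := by
      intro x hx
      have hx' : R + k ≤ ‖x‖ := by simpa using hx.2
      rw [← exp_add, exp_le_exp]
      nlinarith
    have hmeas : ν (shell k) ≤ M * ENNReal.ofReal (R ^ n * ((k : ℝ) + 2) ^ n) := by
      calc ν (shell k) ≤ ν (closedBall 0 (R + k + 1)) := measure_mono sdiff_subset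
        _ ≤ M * ENNReal.ofReal (R + k + 1) ^ n := hν _ (by linarith)
        _ ≤ M * ENNReal.ofReal (R ^ n * ((k : ℝ) + 2) ^ n) := by
          rw [← ENNReal.ofReal_pow (by linarith), ← mul_pow]
          gcongr
          nlinarith
    calc ∫⁻ x in shell k, ENNReal.ofReal (exp (-‖x‖ ^ 2 / 4)) ∂ν
        ≤ ∫⁻ _ in shell k, ENNReal.ofReal (exp (-R ^ 2 / 4) * exp (-k / 2)) ∂ν :=
          setLIntegral_mono measurable_const fun x hx => ENNReal.ofReal_le_ofReal (hexp x hx)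
      _ = ENNReal.ofReal (exp (-R ^ 2 / 4) * exp (-k / 2)) * ν (shell k) := setLIntegral_const _ _
      _ ≤ ENNReal.ofReal (exp (-R ^ 2 / 4) * exp (-k / 2))
            * (M * ENNReal.ofReal (R ^ n * ((k : ℝ) + 2) ^ n)) := by gcongr
      _ = ENNReal.ofReal (c * (((k : ℝ) + 2) ^ n * exp (-k / 2))) := by
          rw [← ENNReal.ofReal_coe_nnreal, ← ENNReal.ofReal_mul (by positivity),
            ← ENNReal.ofReal_mul (by positivity), hc]
          ring_nf
  have hlint : ∫⁻ x in (closedBall 0 R)ᶜ, ENNReal.ofReal (exp (-‖x‖ ^ 2 / 4)) ∂ν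
      ≤ ENNReal.ofReal (c * ∑' k : ℕ, ((k : ℝ) + 2) ^ n * exp (-k / 2)) :=
    calc ∫⁻ x in (closedBall 0 R)ᶜ, ENNReal.ofReal (exp (-‖x‖ ^ 2 / 4)) ∂ν
        ≤ ∫⁻ x in ⋃ k, shell k, ENNReal.ofReal (exp (-‖x‖ ^ 2 / 4)) ∂ν :=
          lintegral_mono_set (compl_closedBall_subset_iUnion_shells 0 R)
      _ ≤ ∑' k, ∫⁻ x in shell k, ENNReal.ofReal (exp (-‖x‖ ^ 2 / 4)) ∂ν :=
          lintegral_iUnion_le _ _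
      _ ≤ ∑' k : ℕ, ENNReal.ofReal (c * (((k : ℝ) + 2) ^ n * exp (-k / 2))) :=
          ENNReal.tsum_le_tsum hshell
      _ = ENNReal.ofReal (c * ∑' k : ℕ, ((k : ℝ) + 2) ^ n * exp (-k / 2)) := by
          rw [← ENNReal.ofReal_tsum_of_nonneg (fun k => by positivity)
            ((summable_add_two_pow_mul_exp_neg_half n).mul_left c), tsum_mul_left]
  rw [integral_eq_lintegral_of_nonneg_ae (ae_of_all _ fun x => (exp_pos _).le)
    (by fun_prop)]
  refine ENNReal.toReal_le_of_le_ofReal (by positivity) (hlint.trans_eq ?_)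
  rw [hc]
  ring_nf

theorem stmt_6 (n : ℕ) :
    ∃ c : ℝ, ∀ C : Set (EuclideanSpace ℝ (Fin (n + 1))),
      IsClosed C → Convex ℝ C → (interior C).Nonempty →
      ∀ R : ℝ, 1 ≤ R →
        (∫ x in frontier C \ Metric.closedBall 0 R, Real.exp (-‖x‖ ^ 2 / 4) ∂(μH[(n : ℝ)]))
          ≤ c * R ^ n * Real.exp (-R ^ 2 / 4) := by
  obtain ⟨M, hM⟩ := exists_hausdorffMeasure_frontier_inter_closedBall_le n
  refine ⟨M * ∑' k : ℕ, ((k : ℝ) + 2) ^ n * exp (-k / 2), fun C hC hconv _ R hR => ?_⟩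
  have hgrowth (r : ℝ) (hr : 1 ≤ r) :
      μH[n].restrict (frontier C) (closedBall 0 r) ≤ M * ENNReal.ofReal r ^ n := by
    rw [Measure.restrict_apply measurableSet_closedBall, inter_comm]
    exact hM C hC hconv r (by linarith)
  rw [sdiff_eq, inter_comm, ← Measure.restrict_restrict measurableSet_closedBall.compl]
  exact integral_exp_neg_sq_compl_closedBall_le _ n M hgrowth hR
end

section
/- If C_k is a sequence of nonempty closed convex subsets of ℝ^{n+1} converging to a closed convex set C in the topology of locally uniform convergence of distance functions, and K is a compact subset of the interior of C, then K ⊆ interior(C_k) for all sufficiently large k. -/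
/-!
Uniform convergence of `infDist · (C k)` on the compact set `cthickening δ K ⊆ interior D`,
where `infDist · D` vanishes, makes every `C k` with `k` large `δ/2`-dense in it. A closed
convex set `C` that is `ε`-dense in `ball x (2ε)` contains `ball x ε`: if `z ∈ ball x ε` were
outside `C`, pushing `z` a distance `ε` away from its nearest point `p ∈ C` would give a point of
`ball x (2ε)` at distance `ε + ‖z - p‖ > ε` from `C`, since `z - p` is an outer normal of `C`
at `p`.
-/

open Metric Filter RealInnerProductSpace

section NormalRay

variable {E : Type*} [NormedAddCommGroup E] [InnerProductSpace ℝ E]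

theorem le_infDist_add_smul_of_inner_le_zero {C : Set E} {z p : E} (hp : p ∈ C)
    (hnormal : ∀ w ∈ C, ⟪z - p, w - p⟫ ≤ 0) (t : ℝ) :
    (1 + t) * ‖z - p‖ ≤ infDist (z + t • (z - p)) C := by
  set v := z - p
  refine (le_infDist ⟨p, hp⟩).2 fun w hw => ?_
  rcases (norm_nonneg v).eq_or_lt with hv | hv
  · rw [← hv, mul_zero]
    exact dist_nonneg
  have hexpand : ⟪v, z + t • v - w⟫ = (1 + t) * ‖v‖ ^ 2 - ⟪v, w - p⟫ := by
    have : z + t • v - w = (1 + t) • v - (w - p) := by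
      simp only [v, add_smul, one_smul]
      abel
    rw [this, inner_sub_right, real_inner_smul_right, real_inner_self_eq_norm_sq]
  have hcs : ⟪v, z + t • v - w⟫ ≤ ‖v‖ * dist (z + t • v) w := by
    rw [dist_eq_norm]
    exact real_inner_le_norm _ _
  refine le_of_mul_le_mul_left ?_ hv
  nlinarith [hnormal w hw]

end NormalRay

section Hilbert

variable {E : Type*} [NormedAddCommGroup E] [InnerProductSpace ℝ E] [CompleteSpace E]

theorem exists_dist_eq_lt_infDist_of_notMem {C : Set E} (hne : C.Nonempty) (hcl : IsClosed C)
    (hconv : Convex ℝ C) {z : E} (hz : z ∉ C) {ε : ℝ} (hε : 0 ≤ ε) :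
    ∃ y, dist y z = ε ∧ ε < infDist y C := by
  obtain ⟨p, hp, hnear⟩ := exists_norm_eq_iInf_of_complete_convex hne hcl.isComplete hconv z
  have hnormal := (norm_eq_iInf_iff_real_inner_le_zero hconv hp).1 hnear
  have hv : 0 < ‖z - p‖ := norm_pos_iff.2 (sub_ne_zero.2 fun h => hz (h ▸ hp))
  refine ⟨z + (ε / ‖z - p‖) • (z - p), ?_, ?_⟩
  · rw [dist_eq_norm, add_sub_cancel_left, norm_smul, Real.norm_of_nonneg (by positivity),
      div_mul_cancel₀ _ hv.ne']
  · calc ε < (1 + ε / ‖z - p‖) * ‖z - p‖ := by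
          rw [add_mul, one_mul, div_mul_cancel₀ _ hv.ne']
          linarith
      _ ≤ _ := le_infDist_add_smul_of_inner_le_zero hp hnormal _

theorem ball_subset_of_forall_infDist_le {C : Set E} (hne : C.Nonempty) (hcl : IsClosed C)
    (hconv : Convex ℝ C) {x : E} {ε : ℝ} (hclose : ∀ y ∈ ball x (2 * ε), infDist y C ≤ ε) :
    ball x ε ⊆ C := by
  intro z hz
  by_contra hzC
  obtain ⟨y, hyz, hfar⟩ :=
    exists_dist_eq_lt_infDist_of_notMem hne hcl hconv hzC (dist_nonneg.trans (mem_ball.1 hz).le)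
  have hyx : y ∈ ball x (2 * ε) := by
    rw [mem_ball]
    linarith [dist_triangle y z x, mem_ball.1 hz]
  linarith [hclose y hyx]

end Hilbert

theorem stmt_7_general {n : ℕ} (C : ℕ → Set (EuclideanSpace ℝ (Fin (n + 1))))
    (hne : ∀ k, (C k).Nonempty) (hcl : ∀ k, IsClosed (C k)) (hconv : ∀ k, Convex ℝ (C k))
    (D : Set (EuclideanSpace ℝ (Fin (n + 1))))
    (hlim : TendstoLocallyUniformly (fun k x => Metric.infDist x (C k))
      (fun x => Metric.infDist x D) Filter.atTop)
    (K : Set (EuclideanSpace ℝ (Fin (n + 1)))) (hK : IsCompact K) (hKD : K ⊆ interior D) :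
    ∀ᶠ k in Filter.atTop, K ⊆ interior (C k) := by
  obtain ⟨δ, hδ, hKδ⟩ := hK.exists_cthickening_subset_open isOpen_interior hKD
  have hunif :=
    (tendstoLocallyUniformly_iff_forall_isCompact.1 hlim) (cthickening δ K) hK.cthickening
  filter_upwards [Metric.tendstoUniformlyOn_iff.1 hunif (δ / 2) (by positivity)] with k hk x hx
  refine interior_mono (ball_subset_of_forall_infDist_le (hne k) (hcl k) (hconv k) fun y hy => ?_)
    (mem_interior_iff_mem_nhds.2 (ball_mem_nhds x (half_pos hδ)))
  rw [mul_div_cancel₀ _ two_ne_zero] at hy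
  have hyδ : y ∈ cthickening δ K :=
    thickening_subset_cthickening δ K (ball_subset_thickening hx δ hy)
  have hclose := hk y hyδ
  rw [infDist_zero_of_mem (interior_subset (hKδ hyδ)), dist_zero_left,
    Real.norm_of_nonneg infDist_nonneg] at hclose
  exact hclose.le

theorem stmt_7 {n : ℕ} (C : ℕ → Set (EuclideanSpace ℝ (Fin (n + 1))))
    (hne : ∀ k, (C k).Nonempty) (hcl : ∀ k, IsClosed (C k)) (hconv : ∀ k, Convex ℝ (C k))
    (D : Set (EuclideanSpace ℝ (Fin (n + 1)))) (hDcl : IsClosed D) (hDconv : Convex ℝ D)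
    (hlim : TendstoLocallyUniformly (fun k x => Metric.infDist x (C k))
      (fun x => Metric.infDist x D) Filter.atTop)
    (K : Set (EuclideanSpace ℝ (Fin (n + 1)))) (hK : IsCompact K) (hKD : K ⊆ interior D) :
    ∀ᶠ k in Filter.atTop, K ⊆ interior (C k) :=
  stmt_7_general C hne hcl hconv D hlim K hK hKD
end

section
/- Every closed convex set C ⊆ ℝ^{n+1} that is symmetric under point reflection (C = −C) and noncompact contains a full line through the origin; consequently C splits as a product: there is a linear subspace L of dimension ≥ 1 and a convex set C' in the orthogonal complement with C = L ⊕ C' (i.e., C = {v + w : v ∈ L, w ∈ C'}). -/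
open Pointwise

/-!
Noncompactness of the closed set `C` means unboundedness, so in finite dimension `C` has a
nonzero direction `b` in its asymptotic cone. Since `C` is closed and convex, every ray
`z + ℝ≥0 • b` with `z ∈ C` stays in `C`; reflecting through the origin gives the opposite ray,
so `C` is invariant under translation by `ℝ • b`. Splitting each point into its orthogonal
projection onto `ℝ • b` and the remainder then exhibits `C` as `ℝ • b + (C ∩ (ℝ • b)ᗮ)`.
-/

section Convex

variable {k V : Type*} [Field k] [LinearOrder k] [IsStrictOrderedRing k]
  [AddCommGroup V] [Module k V] {s : Set V}

theorem Convex.zero_mem_of_neg_eq (hs : Convex k s) (hsym : s = -s) (hne : s.Nonempty) :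
    (0 : V) ∈ s := by
  obtain ⟨z, hz⟩ := hne
  have hz' : -z ∈ s := hsym ▸ Set.neg_mem_neg.2 hz
  simpa using hs hz hz' (by norm_num : (0 : k) ≤ 1 / 2) (by norm_num : (0 : k) ≤ 1 / 2)
    (by norm_num)

variable [TopologicalSpace k] [OrderTopology k] [TopologicalSpace V] [IsTopologicalAddGroup V]
  [ContinuousSMul k V]

theorem Convex.add_smul_mem_of_neg_eq_of_mem_asymptoticCone {v z : V} (hs : Convex k s)
    (hcl : IsClosed s) (hsym : s = -s) (hv : v ∈ asymptoticCone k s) (hz : z ∈ s) (t : k) :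
    z + t • v ∈ s := by
  rcases le_total 0 t with ht | ht
  · simpa [add_comm] using hs.smul_vadd_mem_of_isClosed_of_mem_asymptoticCone hcl ht hv hz
  · have hz' : -z ∈ s := hsym ▸ Set.neg_mem_neg.2 hz
    have hray := hs.smul_vadd_mem_of_isClosed_of_mem_asymptoticCone hcl (neg_nonneg.2 ht) hv hz'
    rw [hsym, Set.mem_neg]
    convert hray using 1
    rw [vadd_eq_add, neg_smul]
    abel

end Convex

theorem Submodule.coe_add_inter_orthogonal_eq {𝕜 E : Type*} [RCLike 𝕜] [NormedAddCommGroup E]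
    [InnerProductSpace 𝕜 E] (K : Submodule 𝕜 E) [K.HasOrthogonalProjection] {s : Set E}
    (hs : ∀ z ∈ s, ∀ v ∈ K, z + v ∈ s) : (K : Set E) + (s ∩ Kᗮ) = s := by
  ext z
  constructor
  · rintro ⟨v, hv, w, ⟨hw, -⟩, rfl⟩
    show v + w ∈ s
    exact add_comm w v ▸ hs w hw v hv
  · intro hz
    have hp : K.starProjection z ∈ K := K.starProjection_apply_mem z
    refine ⟨_, hp, z - K.starProjection z, ⟨?_, K.sub_starProjection_mem_orthogonal z⟩,
      add_sub_cancel _ _⟩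
    simpa [sub_eq_add_neg] using hs z hz _ (K.neg_mem hp)

theorem stmt_13_general {n : ℕ} (C : Set (EuclideanSpace ℝ (Fin (n + 1))))
    (hcl : IsClosed C) (hconv : Convex ℝ C)
    (hsym : C = -C) (hnc : ¬ IsCompact C) :
    (∃ b : EuclideanSpace ℝ (Fin (n + 1)), b ≠ 0 ∧ ∀ σ : ℝ, σ • b ∈ C) ∧
      ∃ (L : Submodule ℝ (EuclideanSpace ℝ (Fin (n + 1))))
        (C' : Set (EuclideanSpace ℝ (Fin (n + 1)))),
        1 ≤ Module.finrank ℝ L ∧ C' ⊆ (Lᗮ : Set (EuclideanSpace ℝ (Fin (n + 1)))) ∧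
        Convex ℝ C' ∧ C = (L : Set (EuclideanSpace ℝ (Fin (n + 1)))) + C' := by
  have hunb : ¬ Bornology.IsBounded C := fun h =>
    hnc (Metric.isCompact_of_isClosed_isBounded hcl h)
  obtain ⟨b, hb0, hb⟩ := not_bounded_iff_exists_ne_zero_mem_asymptoticCone.1 hunb
  have hline : ∀ z ∈ C, ∀ t : ℝ, z + t • b ∈ C := fun z hz t =>
    hconv.add_smul_mem_of_neg_eq_of_mem_asymptoticCone hcl hsym hb hz t
  have h0 : (0 : EuclideanSpace ℝ (Fin (n + 1))) ∈ C :=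
    hconv.zero_mem_of_neg_eq hsym (Bornology.nonempty_of_not_isBounded hunb)
  have hspan : ∀ z ∈ C, ∀ v ∈ ℝ ∙ b, z + v ∈ C := by
    rintro z hz v hv
    obtain ⟨t, rfl⟩ := Submodule.mem_span_singleton.1 hv
    exact hline z hz t
  refine ⟨⟨b, hb0, fun σ => by simpa using hline 0 h0 σ⟩, ℝ ∙ b, C ∩ (ℝ ∙ b)ᗮ,
    (finrank_span_singleton hb0).ge, Set.inter_subset_right, hconv.inter (Submodule.convex _),
    ((ℝ ∙ b).coe_add_inter_orthogonal_eq hspan).symm⟩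

theorem stmt_13 {n : ℕ} (C : Set (EuclideanSpace ℝ (Fin (n + 1))))
    (hne : C.Nonempty) (hcl : IsClosed C) (hconv : Convex ℝ C)
    (hsym : C = -C) (hnc : ¬ IsCompact C) :
    (∃ b : EuclideanSpace ℝ (Fin (n + 1)), b ≠ 0 ∧ ∀ σ : ℝ, σ • b ∈ C) ∧
      ∃ (L : Submodule ℝ (EuclideanSpace ℝ (Fin (n + 1))))
        (C' : Set (EuclideanSpace ℝ (Fin (n + 1)))),
        1 ≤ Module.finrank ℝ L ∧ C' ⊆ (Lᗮ : Set (EuclideanSpace ℝ (Fin (n + 1)))) ∧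
        Convex ℝ C' ∧ C = (L : Set (EuclideanSpace ℝ (Fin (n + 1)))) + C' :=
  stmt_13_general C hcl hconv hsym hnc
end

section
/- The sequence of Huisken energies of round shrinker spheres, a_k = √(4π) · (k/(2e))^{k/2} / Γ((k+1)/2), is strictly decreasing in k ≥ 1 and converges to √2 as k → ∞. -/
/-!
Write `r x = Γ(x + 1) / Γ(x + 1/2)`. Log-convexity of `Γ` gives Gautschi's bounds
`x ≤ r x ^ 2 ≤ x + 1/2`, so `r x ^ 2 / (x + 1/4) → 1`; as this quotient strictly decreases
under `x ↦ x + 1`, it stays above `1`, which is Watson's bound `x + 1/4 < r x ^ 2`.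

Since `a_{k+1}^2 / a_k^2 = (k+1)^{k+1} / (2e k^k r(k/2)^2)`, Watson's bound reduces monotonicity
to `2 (k+1)^{k+1} < e (2k+1) k^k`, which follows from the series
`log (1 + 1/a) = ∑ 2/(2j+1) (2a+1)^{-(2j+1)}`.
For the limit, `a_{2m}^2 = 2π (r m ^ 2 / m) / s_m ^ 2` with `s_m → √π` the Stirling sequence,
and a decreasing sequence converges to the limit of any subsequence.
-/

open Real

noncomputable def huiskenSphereEnergy (k : ℕ) : ℝ :=
  Real.sqrt (4 * π) * ((k : ℝ) / (2 * Real.exp 1)) ^ ((k : ℝ) / 2) /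
    Real.Gamma (((k : ℝ) + 1) / 2)

open Filter Topology

theorem Gamma_add_half_sq_le {x : ℝ} (hx : 0 < x) :
    Gamma (x + 1 / 2) ^ 2 ≤ Gamma x * Gamma (x + 1) := by
  have h := Gamma_mul_add_mul_le_rpow_Gamma_mul_rpow_Gamma hx (by linarith : 0 < x + 1)
    (by norm_num : (0 : ℝ) < 1 / 2) (by norm_num : (0 : ℝ) < 1 / 2) (by norm_num)
  rw [show 1 / 2 * x + 1 / 2 * (x + 1) = x + 1 / 2 by ring, ← mul_rpow (Gamma_pos_of_pos hx).le
    (Gamma_pos_of_pos (by linarith)).le, ← sqrt_eq_rpow] at h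
  calc Gamma (x + 1 / 2) ^ 2 ≤ √(Gamma x * Gamma (x + 1)) ^ 2 := by
        gcongr
    _ = Gamma x * Gamma (x + 1) := sq_sqrt (by positivity)

noncomputable def gammaRatio (x : ℝ) : ℝ := Gamma (x + 1) / Gamma (x + 1 / 2)

theorem gammaRatio_pos {x : ℝ} (hx : 0 < x) : 0 < gammaRatio x :=
  div_pos (Gamma_pos_of_pos (by linarith)) (Gamma_pos_of_pos (by linarith))

theorem le_gammaRatio_sq {x : ℝ} (hx : 0 < x) : x ≤ gammaRatio x ^ 2 := by
  have h := Gamma_add_half_sq_le hx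
  rw [gammaRatio, div_pow, le_div_iff₀ (by positivity)]
  rw [Gamma_add_one hx.ne'] at h ⊢
  linarith [mul_le_mul_of_nonneg_left h hx.le]

theorem gammaRatio_sq_le {x : ℝ} (hx : 0 < x) : gammaRatio x ^ 2 ≤ x + 1 / 2 := by
  have h := Gamma_add_half_sq_le (by linarith : 0 < x + 1 / 2)
  rw [show x + 1 / 2 + 1 / 2 = x + 1 by ring, Gamma_add_one (s := x + 1 / 2) (by positivity)] at h
  rw [gammaRatio, div_pow, div_le_iff₀ (by positivity)]
  linarith

theorem gammaRatio_add_one {x : ℝ} (hx : 0 < x) :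
    gammaRatio (x + 1) = gammaRatio x * ((x + 1) / (x + 1 / 2)) := by
  have h1 : x + 1 / 2 ≠ 0 := by positivity
  simp only [gammaRatio]
  rw [show x + 1 + 1 / 2 = x + 1 / 2 + 1 by ring, Gamma_add_one (by positivity : x + 1 ≠ 0),
    Gamma_add_one h1]
  field_simp

theorem tendsto_gammaRatio_sq_div_add (c : ℝ) :
    Tendsto (fun y => gammaRatio y ^ 2 / (y + c)) atTop (𝓝 1) := by
  have hupper : Tendsto (fun y : ℝ => 1 + 1 / 2 / y) atTop (𝓝 1) := by
    simpa using (tendsto_const_nhds (x := (1 : ℝ))).add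
      ((tendsto_const_nhds (x := (1 / 2 : ℝ))).div_atTop tendsto_id)
  have hdiv : Tendsto (fun y => gammaRatio y ^ 2 / y) atTop (𝓝 1) := by
    refine tendsto_of_tendsto_of_tendsto_of_le_of_le' tendsto_const_nhds hupper ?_ ?_
    all_goals filter_upwards [eventually_gt_atTop 0] with y hy
    · rw [le_div_iff₀ hy, one_mul]; exact le_gammaRatio_sq hy
    · rw [div_le_iff₀ hy]
      calc gammaRatio y ^ 2 ≤ y + 1 / 2 := gammaRatio_sq_le hy
        _ = (1 + 1 / 2 / y) * y := by field_simp
  have hcorr : Tendsto (fun y : ℝ => 1 + c / y) atTop (𝓝 1) := by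
    simpa using (tendsto_const_nhds (x := (1 : ℝ))).add
      ((tendsto_const_nhds (x := c)).div_atTop tendsto_id)
  have := hdiv.div hcorr one_ne_zero
  rw [div_one] at this
  refine this.congr' ?_
  filter_upwards [eventually_gt_atTop 0] with y hy
  rw [Pi.div_apply, one_add_div hy.ne', div_div_div_cancel_right₀ hy.ne']

theorem gammaRatio_sq_div_add_quarter_succ_lt {y : ℝ} (hy : 0 < y) :
    gammaRatio (y + 1) ^ 2 / (y + 1 + 1 / 4) < gammaRatio y ^ 2 / (y + 1 / 4) := by
  have hr := gammaRatio_pos hy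
  have hfactor : (y + 1) ^ 2 * (y + 1 / 4) / ((y + 1 / 2) ^ 2 * (y + 1 + 1 / 4)) < 1 := by
    -- the two cubics differ by the constant `1/16`
    rw [div_lt_one (by positivity)]
    nlinarith
  calc gammaRatio (y + 1) ^ 2 / (y + 1 + 1 / 4)
      = gammaRatio y ^ 2 / (y + 1 / 4) *
          ((y + 1) ^ 2 * (y + 1 / 4) / ((y + 1 / 2) ^ 2 * (y + 1 + 1 / 4))) := by
        rw [gammaRatio_add_one hy]
        field_simp
    _ < gammaRatio y ^ 2 / (y + 1 / 4) := mul_lt_of_lt_one_right (by positivity) hfactor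

theorem add_quarter_lt_gammaRatio_sq {x : ℝ} (hx : 0 < x) : x + 1 / 4 < gammaRatio x ^ 2 := by
  set D : ℕ → ℝ := fun n => gammaRatio (x + n) ^ 2 / (x + n + 1 / 4)
  have hD : StrictAnti D := strictAnti_nat_of_succ_lt fun n => by
    simpa only [D, Nat.cast_succ, add_assoc] using
      gammaRatio_sq_div_add_quarter_succ_lt (by positivity : 0 < x + n)
  have hlim : Tendsto D atTop (𝓝 1) :=
    (tendsto_gammaRatio_sq_div_add (1 / 4)).comp
      (tendsto_atTop_add_const_left _ x tendsto_natCast_atTop_atTop)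
  have h1 : 1 < D 0 := (hD.antitone.le_of_tendsto hlim 1).trans_lt (hD zero_lt_one)
  simp only [D, Nat.cast_zero, add_zero] at h1
  rwa [one_lt_div (by positivity)] at h1

theorem log_one_add_inv_le {a : ℝ} (ha : 0 < a) :
    log (1 + a⁻¹) ≤ 2 / (2 * a + 1) + 1 / (6 * a * (a + 1) * (2 * a + 1)) := by
  have hseries := (hasSum_nat_add_iff' 1).mpr (hasSum_log_one_add_inv ha)
  set u : ℝ := 1 / (2 * a + 1) with hu
  have hu1 : u ^ 2 < 1 := by
    rw [hu, div_pow, one_pow, div_lt_one (by positivity)]; nlinarith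
  have hgeom := (hasSum_geometric_of_lt_one (sq_nonneg u) hu1).mul_left (2 / 3 * u ^ 3)
  have hle := hasSum_le (fun j => ?_) hseries hgeom
  · simp only [Finset.range_one, Finset.sum_singleton, Nat.cast_zero, mul_zero, zero_add,
      div_one, pow_one, mul_one] at hle
    have hrhs : 2 / (2 * a + 1) + 1 / (6 * a * (a + 1) * (2 * a + 1)) =
        2 * u + 2 / 3 * u ^ 3 * (1 - u ^ 2)⁻¹ := by
      rw [show 1 - u ^ 2 = 4 * a * (a + 1) / (2 * a + 1) ^ 2 by rw [hu]; field_simp; ring, hu]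
      field_simp
      ring
    linarith
  · have hcoeff : 1 / (2 * ((j : ℝ) + 1) + 1) ≤ 1 / 3 :=
      one_div_le_one_div_of_le (by norm_num) (by linarith [j.cast_nonneg (α := ℝ)])
    calc 2 * (1 / (2 * ((j + 1 : ℕ) : ℝ) + 1)) * u ^ (2 * (j + 1) + 1)
        = 2 * (1 / (2 * ((j : ℝ) + 1) + 1)) * (u ^ 3 * (u ^ 2) ^ j) := by push_cast; ring
      _ ≤ 2 * (1 / 3) * (u ^ 3 * (u ^ 2) ^ j) := by gcongr
      _ = 2 / 3 * u ^ 3 * (u ^ 2) ^ j := by ring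

theorem two_mul_add_one_rpow_add_one_lt {s : ℝ} (hs : 0 < s) :
    2 * (s + 1) ^ (s + 1) < exp 1 * (2 * s + 1) * s ^ s := by
  have h₁ := log_one_add_inv_le hs
  have h₂ := log_one_add_inv_le (by positivity : 0 < 2 * s + 1)
  rw [show 1 + s⁻¹ = (s + 1) / s by field_simp, log_div (by positivity) hs.ne'] at h₁
  rw [show 1 + (2 * s + 1)⁻¹ = 2 * (s + 1) / (2 * s + 1) by field_simp; ring,
    log_div (by positivity) (by positivity), log_mul two_ne_zero (by positivity)] at h₂
  have hgap : s * (2 / (2 * s + 1) + 1 / (6 * s * (s + 1) * (2 * s + 1))) +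
      (2 / (2 * (2 * s + 1) + 1) +
        1 / (6 * (2 * s + 1) * (2 * s + 1 + 1) * (2 * (2 * s + 1) + 1))) < 1 := by
    rw [← sub_pos]
    convert (by positivity : 0 < (4 * s + 5) / (12 * (s + 1) * (2 * s + 1) * (4 * s + 3))) using 1
    field_simp
    ring
  rw [← log_lt_log_iff (by positivity) (by positivity), log_mul two_ne_zero (by positivity),
    log_mul (by positivity) (by positivity), log_mul (by positivity) (by positivity), log_exp,
    log_rpow (by positivity), log_rpow hs]
  linarith [mul_le_mul_of_nonneg_left h₁ hs.le]

theorem huiskenSphereEnergy_sq (k : ℕ) :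
    huiskenSphereEnergy k ^ 2 =
      4 * π * ((k : ℝ) / (2 * exp 1)) ^ (k : ℝ) / Gamma (((k : ℝ) + 1) / 2) ^ 2 := by
  rw [huiskenSphereEnergy, div_pow, mul_pow, sq_sqrt (by positivity), ← rpow_two,
    ← rpow_mul (by positivity), div_mul_cancel₀ _ two_ne_zero]

theorem huiskenSphereEnergy_pos (k : ℕ) : 0 < huiskenSphereEnergy k := by
  rcases k.eq_zero_or_pos with rfl | hk
  · simp only [huiskenSphereEnergy, CharP.cast_eq_zero, zero_div, rpow_zero, mul_one]
    positivity
  · unfold huiskenSphereEnergy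
    positivity

theorem huiskenSphereEnergy_succ_sq {k : ℕ} (hk : 0 < k) :
    huiskenSphereEnergy (k + 1) ^ 2 = huiskenSphereEnergy k ^ 2 *
      (((k : ℝ) + 1) ^ ((k : ℝ) + 1) /
        (2 * exp 1 * (k : ℝ) ^ (k : ℝ) * gammaRatio (k / 2) ^ 2)) := by
  rw [huiskenSphereEnergy_sq, huiskenSphereEnergy_sq, gammaRatio, Nat.cast_succ,
    div_rpow (by positivity) (by positivity), div_rpow (by positivity) (by positivity),
    rpow_add_one (by positivity : 2 * exp 1 ≠ 0),
    show (k : ℝ) / 2 + 1 / 2 = ((k : ℝ) + 1) / 2 by ring,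
    show (k : ℝ) / 2 + 1 = ((k : ℝ) + 1 + 1) / 2 by ring]
  field_simp

theorem huiskenSphereEnergy_succ_lt {k : ℕ} (hk : 0 < k) :
    huiskenSphereEnergy (k + 1) < huiskenSphereEnergy k := by
  have hs : (0 : ℝ) < k := by exact_mod_cast hk
  have hE := huiskenSphereEnergy_pos k
  have hfactor : ((k : ℝ) + 1) ^ ((k : ℝ) + 1) /
      (2 * exp 1 * (k : ℝ) ^ (k : ℝ) * gammaRatio (k / 2) ^ 2) < 1 := by
    have hWatson := add_quarter_lt_gammaRatio_sq (half_pos hs)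
    have hr : 0 < gammaRatio (k / 2) ^ 2 := by linarith
    rw [div_lt_one (by positivity)]
    calc ((k : ℝ) + 1) ^ ((k : ℝ) + 1)
        < exp 1 * (2 * k + 1) * (k : ℝ) ^ (k : ℝ) / 2 := by
          linarith [two_mul_add_one_rpow_add_one_lt hs]
      _ = 2 * exp 1 * (k : ℝ) ^ (k : ℝ) * (k / 2 + 1 / 4) := by ring
      _ < 2 * exp 1 * (k : ℝ) ^ (k : ℝ) * gammaRatio (k / 2) ^ 2 := by gcongr
  refine lt_of_pow_lt_pow_left₀ 2 hE.le ?_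
  rw [huiskenSphereEnergy_succ_sq hk]
  exact mul_lt_of_lt_one_right (pow_pos hE 2) hfactor

open Stirling in
theorem huiskenSphereEnergy_two_mul_sq {m : ℕ} (hm : m ≠ 0) :
    huiskenSphereEnergy (2 * m) ^ 2 = 2 * π * (gammaRatio m ^ 2 / m) / stirlingSeq m ^ 2 := by
  rw [huiskenSphereEnergy_sq, rpow_natCast, gammaRatio, Gamma_nat_eq_factorial, stirlingSeq]
  push_cast
  rw [show (2 * (m : ℝ) + 1) / 2 = m + 1 / 2 by ring,
    show 2 * (m : ℝ) / (2 * exp 1) = m / exp 1 by field_simp, pow_mul]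
  field_simp
  rw [sq_sqrt (by positivity)]
  ring

theorem tendsto_huiskenSphereEnergy_two_mul :
    Tendsto (fun m : ℕ => huiskenSphereEnergy (2 * m)) atTop (𝓝 (√2)) := by
  have hratio : Tendsto (fun m : ℕ => gammaRatio m ^ 2 / m) atTop (𝓝 1) := by
    simpa [Function.comp_def] using
      (tendsto_gammaRatio_sq_div_add 0).comp tendsto_natCast_atTop_atTop
  have hlim := (hratio.const_mul (2 * π)).div (Stirling.tendsto_stirlingSeq_sqrt_pi.pow 2)
    (by positivity)
  rw [mul_one, sq_sqrt pi_pos.le, mul_div_cancel_right₀ _ pi_pos.ne'] at hlim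
  have hsq : Tendsto (fun m : ℕ => huiskenSphereEnergy (2 * m) ^ 2) atTop (𝓝 2) := by
    refine hlim.congr' ?_
    filter_upwards [eventually_ne_atTop 0] with m hm
    exact (huiskenSphereEnergy_two_mul_sq hm).symm
  simpa only [sqrt_sq (huiskenSphereEnergy_pos _).le] using hsq.sqrt

theorem stmt_15 :
    (∀ k : ℕ, 1 ≤ k → huiskenSphereEnergy (k + 1) < huiskenSphereEnergy k) ∧
      Filter.Tendsto huiskenSphereEnergy Filter.atTop (nhds (Real.sqrt 2)) := by
  have hanti : Antitone fun n => huiskenSphereEnergy (n + 1) :=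
    antitone_nat_of_succ_le fun n => (huiskenSphereEnergy_succ_lt n.succ_pos).le
  refine ⟨fun k hk => huiskenSphereEnergy_succ_lt hk, ?_⟩
  rw [← tendsto_add_atTop_iff_nat 1, tendsto_iff_tendsto_subseq_of_antitone hanti
    ((tendsto_add_atTop_nat 1).comp (tendsto_id.const_mul_atTop' two_pos))]
  simpa only [id_eq, Function.comp_def, mul_add, mul_one] using
    tendsto_huiskenSphereEnergy_two_mul.comp (tendsto_add_atTop_nat 1)
end

section
/- Let g, h : [τ_0, τ_1] → ℝ with h nonnegative, nonincreasing, differentiable, g differentiable, and suppose −g'(τ) ≤ √(−½ d(h(τ)²)/dτ) for all τ. Then g(τ_0) − g(τ_1) ≤ (1/√2) · h(τ_0) · √(τ_1 − τ_0). -/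
/-!
For every `a > 0`, AM-GM bounds `√(-h h')` by `a / 2 - h h' / (2 a)`, so the hypothesis makes
`g τ + a τ / 2 - h(τ)² / (4 a)` nondecreasing. Comparing its values at the endpoints gives
`g τ₀ - g τ₁ ≤ a (τ₁ - τ₀) / 2 + h(τ₀)² / (4 a)`, and minimising over `a` gives the bound.
-/

open Set

lemma sqrt_le_div_two_add_div {a p : ℝ} (ha : 0 < a) (hp : 0 ≤ p) :
    √p ≤ a / 2 + p / (2 * a) := by
  rw [div_add_div _ _ two_ne_zero (by positivity), le_div_iff₀ (by positivity)]
  nlinarith [sq_nonneg (√p - a), Real.sq_sqrt hp]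

lemma le_of_hasDerivAt_nonneg_Icc {f f' : ℝ → ℝ} {a b : ℝ} (hab : a ≤ b)
    (hf : ∀ x ∈ Icc a b, HasDerivAt f (f' x) x) (hf' : ∀ x ∈ Icc a b, 0 ≤ f' x) :
    f a ≤ f b :=
  monotoneOn_of_hasDerivWithinAt_nonneg (convex_Icc a b)
    (fun x hx ↦ (hf x hx).continuousAt.continuousWithinAt)
    (fun x hx ↦ (hf x (interior_subset hx)).hasDerivWithinAt)
    (fun x hx ↦ hf' x (interior_subset hx))
    (left_mem_Icc.2 hab) (right_mem_Icc.2 hab) hab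

lemma sub_le_mul_add_sq_div_of_neg_deriv_le_sqrt {τ₀ τ₁ a : ℝ} {g h g' h' : ℝ → ℝ}
    (hτ : τ₀ ≤ τ₁) (ha : 0 < a)
    (hg : ∀ τ ∈ Icc τ₀ τ₁, HasDerivAt g (g' τ) τ)
    (hh : ∀ τ ∈ Icc τ₀ τ₁, HasDerivAt h (h' τ) τ)
    (hprod : ∀ τ ∈ Icc τ₀ τ₁, 0 ≤ -(h τ * h' τ))
    (hineq : ∀ τ ∈ Icc τ₀ τ₁, -g' τ ≤ √(-(h τ * h' τ))) :
    g τ₀ - g τ₁ ≤ a * (τ₁ - τ₀) / 2 + h τ₀ ^ 2 / (4 * a) := by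
  have hderiv : ∀ τ ∈ Icc τ₀ τ₁, HasDerivAt (fun τ ↦ g τ + a * τ / 2 - h τ ^ 2 / (4 * a))
      (g' τ + a / 2 - h τ * h' τ / (2 * a)) τ := fun τ hτ ↦ by
    refine (((hg τ hτ).fun_add (((hasDerivAt_id' τ).const_mul a).div_const 2)).fun_sub
      (((hh τ hτ).fun_pow 2).div_const (4 * a))).congr_deriv ?_
    field_simp
    ring
  have hderiv_nonneg : ∀ τ ∈ Icc τ₀ τ₁, 0 ≤ g' τ + a / 2 - h τ * h' τ / (2 * a) := fun τ hτ ↦ by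
    have := (hineq τ hτ).trans (sqrt_le_div_two_add_div ha (hprod τ hτ))
    rw [neg_div] at this
    linarith
  have hmono := le_of_hasDerivAt_nonneg_Icc hτ hderiv hderiv_nonneg
  have : 0 ≤ h τ₁ ^ 2 / (4 * a) := by positivity
  linarith

lemma le_two_mul_mul_of_forall_le_mul_sq_add_sq_div {D s t : ℝ} (hs : 0 < s) (ht : 0 ≤ t)
    (hD : ∀ a > 0, D ≤ a * s ^ 2 + t ^ 2 / a) : D ≤ 2 * s * t := by
  refine le_of_forall_pos_le_add fun ε hε ↦ ?_
  -- near-optimal choice `a = (t + δ) / s`, with `δ = ε / s`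
  set δ := ε / s
  have hδ : 0 < δ := div_pos hε hs
  have hbound : t ^ 2 / ((t + δ) / s) ≤ t * s := by
    rw [div_le_iff₀ (by positivity)]
    field_simp
    nlinarith
  calc D ≤ (t + δ) / s * s ^ 2 + t ^ 2 / ((t + δ) / s) := hD _ (by positivity)
    _ ≤ (t + δ) / s * s ^ 2 + t * s := by linarith
    _ = 2 * s * t + ε := by
        simp only [δ]; field_simp; ring

theorem stmt_19 (τ₀ τ₁ : ℝ) (hτ : τ₀ < τ₁) (g h g' h' : ℝ → ℝ)
    (hg : ∀ τ ∈ Set.Icc τ₀ τ₁, HasDerivAt g (g' τ) τ)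
    (hh : ∀ τ ∈ Set.Icc τ₀ τ₁, HasDerivAt h (h' τ) τ)
    (hpos : ∀ τ ∈ Set.Icc τ₀ τ₁, 0 ≤ h τ)
    (hdec : ∀ τ ∈ Set.Icc τ₀ τ₁, h' τ ≤ 0)
    (hineq : ∀ τ ∈ Set.Icc τ₀ τ₁, -g' τ ≤ Real.sqrt (-(h τ * h' τ))) :
    g τ₀ - g τ₁ ≤ (1 / Real.sqrt 2) * h τ₀ * Real.sqrt (τ₁ - τ₀) := by
  have hprod : ∀ τ ∈ Icc τ₀ τ₁, 0 ≤ -(h τ * h' τ) := fun τ hτ ↦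
    neg_nonneg.2 (mul_nonpos_of_nonneg_of_nonpos (hpos τ hτ) (hdec τ hτ))
  have hΔ : 0 ≤ (τ₁ - τ₀) / 2 := by linarith
  have hbound := le_two_mul_mul_of_forall_le_mul_sq_add_sq_div (s := √((τ₁ - τ₀) / 2))
    (t := h τ₀ / 2) (by positivity) (by linarith [hpos τ₀ (left_mem_Icc.2 hτ.le)]) fun a ha ↦ by
      convert sub_le_mul_add_sq_div_of_neg_deriv_le_sqrt hτ.le ha hg hh hprod hineq using 1
      rw [Real.sq_sqrt hΔ]
      ring
  calc g τ₀ - g τ₁ ≤ 2 * √((τ₁ - τ₀) / 2) * (h τ₀ / 2) := hbound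
    _ = 1 / √2 * h τ₀ * √(τ₁ - τ₀) := by
      rw [Real.sqrt_div' _ zero_le_two]
      ring
end
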